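/- Let a, b, c, w, z, f : ℝ² → ℝ be C¹ functions and let θ, φ : ℝ² → ℝ be C² functions that are nowhere zero. Suppose there exist C¹ functions α, β, γ, δ : ℝ² → ℝ such that for every C² function X : ℝ² → ℝ and every point of ℝ²: φ·ℒ(θX) = α X_xx + β X_yy + (γ+δ) X_xy + (α_x + δ_y) X_x + (β_y + γ_x) X_y, where ℒψ := aψ_xx + bψ_yy + 2cψ_xy + (a_x+c_y+w)ψ_x + (b_y+c_x+z)ψ_y − fψ. Then ℒθ = 0 and ℒ†φ = 0 on all of ℝ², where ℒ†φ := (aφ_x + cφ_y − wφ)_x + (bφ_y + cφ_x − zφ)_y − fφ. -/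

import Mathlib

/-- Partial derivative with respect to the first variable. -/
noncomputable def px (f : ℝ × ℝ → ℝ) : ℝ × ℝ → ℝ :=
  fun p => fderiv ℝ f p (1, 0)

/-- Partial derivative with respect to the second variable. -/
noncomputable def py (f : ℝ × ℝ → ℝ) : ℝ × ℝ → ℝ :=
  fun p => fderiv ℝ f p (0, 1)

/-- The general second-order operator
`ℒψ = aψ_xx + bψ_yy + 2cψ_xy + (a_x+c_y+w)ψ_x + (b_y+c_x+z)ψ_y − fψ`. -/
noncomputable def Lop (a b c w z f ψ : ℝ × ℝ → ℝ) : ℝ × ℝ → ℝ :=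
  fun p =>
    a p * px (px ψ) p + b p * py (py ψ) p + 2 * c p * px (py ψ) p
      + (px a p + py c p + w p) * px ψ p
      + (py b p + px c p + z p) * py ψ p - f p * ψ p

/-- The formal adjoint `ℒ†φ = (aφ_x + cφ_y − wφ)_x + (bφ_y + cφ_x − zφ)_y − fφ`. -/
noncomputable def Ladj (a b c w z f φ : ℝ × ℝ → ℝ) : ℝ × ℝ → ℝ :=
  fun p =>
    px (fun q => a q * px φ q + c q * py φ q - w q * φ q) p
      + py (fun q => b q * py φ q + c q * px φ q - z q * φ q) p - f p * φ p

/-! Testing `φ ℒ(θX)` against the elementary form on `X = 1, x, y, x², y², xy` identifies the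
coefficients: `φ ℒθ = 0`, `α = φaθ`, `β = φbθ`, `γ + δ = 2φcθ`, and two first-order relations.
With Lagrange's identity `φ ℒθ - θ ℒ†φ = ∂ₓP + ∂ᵧQ`, the latter say that `u = δ - φcθ` is a
stream function of `(P, Q)`: `u_y = P`, `u_x = -Q`. So `u` is `C²` and the symmetry of its mixed
partials gives `∂ₓP + ∂ᵧQ = 0`, whence `θ ℒ†φ = 0`. -/

section Partials

variable {f g : ℝ × ℝ → ℝ}

lemma px_add (hf : Differentiable ℝ f) (hg : Differentiable ℝ g) :
    px (fun q => f q + g q) = fun q => px f q + px g q := by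
  ext q; simp [px, fderiv_fun_add (hf q) (hg q)]

lemma py_add (hf : Differentiable ℝ f) (hg : Differentiable ℝ g) :
    py (fun q => f q + g q) = fun q => py f q + py g q := by
  ext q; simp [py, fderiv_fun_add (hf q) (hg q)]

lemma px_sub (hf : Differentiable ℝ f) (hg : Differentiable ℝ g) :
    px (fun q => f q - g q) = fun q => px f q - px g q := by
  ext q; simp [px, fderiv_fun_sub (hf q) (hg q)]

lemma py_sub (hf : Differentiable ℝ f) (hg : Differentiable ℝ g) :
    py (fun q => f q - g q) = fun q => py f q - py g q := by
  ext q; simp [py, fderiv_fun_sub (hf q) (hg q)]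

lemma px_mul (hf : Differentiable ℝ f) (hg : Differentiable ℝ g) :
    px (fun q => f q * g q) = fun q => px f q * g q + f q * px g q := by
  ext q; simp [px, fderiv_fun_mul (hf q) (hg q)]; ring

lemma py_mul (hf : Differentiable ℝ f) (hg : Differentiable ℝ g) :
    py (fun q => f q * g q) = fun q => py f q * g q + f q * py g q := by
  ext q; simp [py, fderiv_fun_mul (hf q) (hg q)]; ring

@[simp] lemma px_const (r : ℝ) : px (fun _ => r) = fun _ => 0 := by ext; simp [px]
@[simp] lemma py_const (r : ℝ) : py (fun _ => r) = fun _ => 0 := by ext; simp [py]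
@[simp] lemma px_fst : px Prod.fst = fun _ => 1 := by ext; simp [px, fderiv_fst]
@[simp] lemma py_fst : py Prod.fst = fun _ => 0 := by ext; simp [py, fderiv_fst]
@[simp] lemma px_snd : px Prod.snd = fun _ => 0 := by ext; simp [px, fderiv_snd]
@[simp] lemma py_snd : py Prod.snd = fun _ => 1 := by ext; simp [py, fderiv_snd]

lemma py_neg : py (fun q => -f q) = fun q => -py f q := by
  ext; simp [py]

lemma fderiv_apply_eq_px_add_py (x v : ℝ × ℝ) :
    fderiv ℝ f x v = v.1 * px f x + v.2 * py f x := by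
  have hv : v = v.1 • ((1 : ℝ), (0 : ℝ)) + v.2 • ((0 : ℝ), (1 : ℝ)) := by simp
  conv_lhs => rw [hv, map_add, map_smul, map_smul]
  simp [px, py]

lemma ContDiff.px {m n : WithTop ℕ∞} (hf : ContDiff ℝ n f) (hmn : m + 1 ≤ n) :
    ContDiff ℝ m (px f) :=
  (hf.fderiv_right hmn).clm_apply contDiff_const

lemma ContDiff.py {m n : WithTop ℕ∞} (hf : ContDiff ℝ n f) (hmn : m + 1 ≤ n) :
    ContDiff ℝ m (py f) :=
  (hf.fderiv_right hmn).clm_apply contDiff_const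

lemma contDiff_succ_of_px_py {n : ℕ} (hf : Differentiable ℝ f) (hx : ContDiff ℝ n (px f))
    (hy : ContDiff ℝ n (py f)) : ContDiff ℝ (n + 1) f := by
  refine contDiff_succ_iff_fderiv_apply.2 ⟨hf, by simp, fun v => ?_⟩
  simp only [fderiv_apply_eq_px_add_py]
  exact (contDiff_const.mul hx).add (contDiff_const.mul hy)

lemma px_py_comm {p : ℝ × ℝ} (hf : ContDiffAt ℝ 2 f p) : px (py f) p = py (px f) p := by
  have hdf : DifferentiableAt ℝ (fderiv ℝ f) p :=
    (hf.fderiv_right (m := 1) le_rfl).differentiableAt one_ne_zero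
  change fderiv ℝ (fun q => fderiv ℝ f q (0, 1)) p (1, 0)
    = fderiv ℝ (fun q => fderiv ℝ f q (1, 0)) p (0, 1)
  simp only [fderiv_clm_apply hdf (differentiableAt_const _)]
  simpa using (hf.isSymmSndFDerivAt (by simp)) (1, 0) (0, 1)

end Partials

lemma coeffs_eq_zero_of_forall_contDiff {p : ℝ × ℝ} {c₀ c₁ c₂ c₁₁ c₂₂ c₁₂ : ℝ}
    (h : ∀ X : ℝ × ℝ → ℝ, ContDiff ℝ 2 X →
      c₀ * X p + c₁ * px X p + c₂ * py X p + c₁₁ * px (px X) p + c₂₂ * py (py X) p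
        + c₁₂ * px (py X) p = 0) :
    c₀ = 0 ∧ c₁ = 0 ∧ c₂ = 0 ∧ c₁₁ = 0 ∧ c₂₂ = 0 ∧ c₁₂ = 0 := by
  have h₀ := h (fun _ => 1) contDiff_const
  have hx := h Prod.fst contDiff_fst
  have hy := h Prod.snd contDiff_snd
  have hxx := h (fun q => q.1 * q.1) (contDiff_fst.mul contDiff_fst)
  have hyy := h (fun q => q.2 * q.2) (contDiff_snd.mul contDiff_snd)
  have hxy := h (fun q => q.1 * q.2) (contDiff_fst.mul contDiff_snd)
  simp (disch := fun_prop) only [px_mul, py_mul, px_add, py_add, px_fst, py_fst, px_snd, py_snd,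
    px_const, py_const] at h₀ hx hy hxx hyy hxy
  norm_num at h₀ hx hy hxx hyy hxy
  obtain rfl := h₀
  obtain rfl : c₁ = 0 := by linarith
  obtain rfl : c₂ = 0 := by linarith
  exact ⟨rfl, rfl, rfl, by linarith, by linarith, by linarith⟩

lemma Lop_mul (a b c w z f : ℝ × ℝ → ℝ) {θ X : ℝ × ℝ → ℝ} (hθ : ContDiff ℝ 2 θ)
    (hX : ContDiff ℝ 2 X) (p : ℝ × ℝ) :
    Lop a b c w z f (fun q => θ q * X q) p =
      Lop a b c w z f θ p * X p
        + (2 * a p * px θ p + 2 * c p * py θ p + (px a p + py c p + w p) * θ p) * px X p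
        + (2 * b p * py θ p + 2 * c p * px θ p + (py b p + px c p + z p) * θ p) * py X p
        + a p * θ p * px (px X) p + b p * θ p * py (py X) p
        + 2 * c p * θ p * px (py X) p := by
  have hθ₁ := hθ.differentiable two_ne_zero
  have hX₁ := hX.differentiable two_ne_zero
  have hθx := (hθ.px (m := 1) le_rfl).differentiable one_ne_zero
  have hθy := (hθ.py (m := 1) le_rfl).differentiable one_ne_zero
  have hXx := (hX.px (m := 1) le_rfl).differentiable one_ne_zero
  have hXy := (hX.py (m := 1) le_rfl).differentiable one_ne_zero
  simp (disch := fun_prop) only [Lop, px_mul, py_mul, px_add, py_add]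
  ring

noncomputable def lagrangeFluxX (a c w θ φ : ℝ × ℝ → ℝ) : ℝ × ℝ → ℝ :=
  fun q => a q * (φ q * px θ q - θ q * px φ q) + c q * (φ q * py θ q - θ q * py φ q)
    + w q * θ q * φ q

noncomputable def lagrangeFluxY (b c z θ φ : ℝ × ℝ → ℝ) : ℝ × ℝ → ℝ :=
  fun q => b q * (φ q * py θ q - θ q * py φ q) + c q * (φ q * px θ q - θ q * px φ q)
    + z q * θ q * φ q

lemma contDiff_lagrangeFluxX {a c w θ φ : ℝ × ℝ → ℝ} {n : WithTop ℕ∞} (ha : ContDiff ℝ n a)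
    (hc : ContDiff ℝ n c) (hw : ContDiff ℝ n w) (hθ : ContDiff ℝ (n + 1) θ)
    (hφ : ContDiff ℝ (n + 1) φ) : ContDiff ℝ n (lagrangeFluxX a c w θ φ) := by
  have := hθ.px le_rfl; have := hθ.py le_rfl; have := hφ.px le_rfl; have := hφ.py le_rfl
  have := hθ.of_le le_self_add; have := hφ.of_le le_self_add
  unfold lagrangeFluxX
  fun_prop

lemma contDiff_lagrangeFluxY {b c z θ φ : ℝ × ℝ → ℝ} {n : WithTop ℕ∞} (hb : ContDiff ℝ n b)
    (hc : ContDiff ℝ n c) (hz : ContDiff ℝ n z) (hθ : ContDiff ℝ (n + 1) θ)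
    (hφ : ContDiff ℝ (n + 1) φ) : ContDiff ℝ n (lagrangeFluxY b c z θ φ) := by
  have := hθ.px le_rfl; have := hθ.py le_rfl; have := hφ.px le_rfl; have := hφ.py le_rfl
  have := hθ.of_le le_self_add; have := hφ.of_le le_self_add
  unfold lagrangeFluxY
  fun_prop

lemma mul_Lop_sub_mul_Ladj {a b c w z θ φ : ℝ × ℝ → ℝ} (f : ℝ × ℝ → ℝ)
    (ha : Differentiable ℝ a) (hb : Differentiable ℝ b) (hc : Differentiable ℝ c)
    (hw : Differentiable ℝ w) (hz : Differentiable ℝ z)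
    (hθ : ContDiff ℝ 2 θ) (hφ : ContDiff ℝ 2 φ) (p : ℝ × ℝ) :
    φ p * Lop a b c w z f θ p - θ p * Ladj a b c w z f φ p
      = px (lagrangeFluxX a c w θ φ) p + py (lagrangeFluxY b c z θ φ) p := by
  have hθ₁ := hθ.differentiable two_ne_zero
  have hφ₁ := hφ.differentiable two_ne_zero
  have hθx := (hθ.px (m := 1) le_rfl).differentiable one_ne_zero
  have hθy := (hθ.py (m := 1) le_rfl).differentiable one_ne_zero
  have hφx := (hφ.px (m := 1) le_rfl).differentiable one_ne_zero
  have hφy := (hφ.py (m := 1) le_rfl).differentiable one_ne_zero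
  unfold lagrangeFluxX lagrangeFluxY
  simp (disch := fun_prop) only [Lop, Ladj, px_mul, py_mul,
    px_add, py_add, px_sub, py_sub, ← px_py_comm hθ.contDiffAt, ← px_py_comm hφ.contDiffAt]
  ring

def IsElementaryForm (a b c w z f θ φ α β γ δ : ℝ × ℝ → ℝ) : Prop :=
  ∀ X : ℝ × ℝ → ℝ, ContDiff ℝ 2 X → ∀ p : ℝ × ℝ,
    φ p * Lop a b c w z f (fun q => θ q * X q) p =
      α p * px (px X) p + β p * py (py X) p + (γ p + δ p) * px (py X) p
        + (px α p + py δ p) * px X p + (py β p + px γ p) * py X p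

namespace IsElementaryForm

variable {a b c w z f θ φ α β γ δ : ℝ × ℝ → ℝ}

lemma coeffs_eq (hT : IsElementaryForm a b c w z f θ φ α β γ δ) (hθ : ContDiff ℝ 2 θ)
    (p : ℝ × ℝ) :
    φ p * Lop a b c w z f θ p = 0 ∧
      px α p + py δ p
        = φ p * (2 * a p * px θ p + 2 * c p * py θ p + (px a p + py c p + w p) * θ p) ∧
      py β p + px γ p
        = φ p * (2 * b p * py θ p + 2 * c p * px θ p + (py b p + px c p + z p) * θ p) ∧
      α p = φ p * a p * θ p ∧ β p = φ p * b p * θ p ∧ γ p + δ p = 2 * φ p * c p * θ p := by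
  obtain ⟨h₀, h₁, h₂, h₁₁, h₂₂, h₁₂⟩ := coeffs_eq_zero_of_forall_contDiff (p := p)
    (c₀ := φ p * Lop a b c w z f θ p)
    (c₁ := φ p * (2 * a p * px θ p + 2 * c p * py θ p + (px a p + py c p + w p) * θ p)
      - (px α p + py δ p))
    (c₂ := φ p * (2 * b p * py θ p + 2 * c p * px θ p + (py b p + px c p + z p) * θ p)
      - (py β p + px γ p))
    (c₁₁ := φ p * a p * θ p - α p) (c₂₂ := φ p * b p * θ p - β p)
    (c₁₂ := 2 * φ p * c p * θ p - (γ p + δ p)) fun X hX => by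
      linear_combination hT X hX p - φ p * Lop_mul a b c w z f hθ hX p
  exact ⟨h₀, by linear_combination -h₁, by linear_combination -h₂, by linear_combination -h₁₁,
    by linear_combination -h₂₂, by linear_combination -h₁₂⟩

lemma Lop_eq_zero (hT : IsElementaryForm a b c w z f θ φ α β γ δ) (hθ : ContDiff ℝ 2 θ)
    (hφ : ∀ p, φ p ≠ 0) (p : ℝ × ℝ) : Lop a b c w z f θ p = 0 :=
  (mul_eq_zero.1 (hT.coeffs_eq hθ p).1).resolve_left (hφ p)

lemma py_sub_eq_lagrangeFluxX (hT : IsElementaryForm a b c w z f θ φ α β γ δ)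
    (ha : Differentiable ℝ a) (hc : Differentiable ℝ c) (hθ : ContDiff ℝ 2 θ)
    (hφ : Differentiable ℝ φ) (hδ : Differentiable ℝ δ) :
    py (fun q => δ q - φ q * c q * θ q) = lagrangeFluxX a c w θ φ := by
  have hθ₁ := hθ.differentiable two_ne_zero
  have hα : α = fun q => φ q * a q * θ q := funext fun q => (hT.coeffs_eq hθ q).2.2.2.1
  ext p
  have hx := (hT.coeffs_eq hθ p).2.1
  rw [hα] at hx
  simp (disch := fun_prop) only [px_mul, py_mul, py_sub, lagrangeFluxX] at hx ⊢
  linear_combination hx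

lemma px_sub_eq_neg_lagrangeFluxY (hT : IsElementaryForm a b c w z f θ φ α β γ δ)
    (hb : Differentiable ℝ b) (hc : Differentiable ℝ c) (hθ : ContDiff ℝ 2 θ)
    (hφ : Differentiable ℝ φ) (hδ : Differentiable ℝ δ) :
    px (fun q => δ q - φ q * c q * θ q) = fun q => -lagrangeFluxY b c z θ φ q := by
  have hθ₁ := hθ.differentiable two_ne_zero
  have hβ : β = fun q => φ q * b q * θ q := funext fun q => (hT.coeffs_eq hθ q).2.2.2.2.1
  have hγ : γ = fun q => 2 * φ q * c q * θ q - δ q :=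
    funext fun q => eq_sub_of_add_eq (hT.coeffs_eq hθ q).2.2.2.2.2
  ext p
  have hy := (hT.coeffs_eq hθ p).2.2.1
  rw [hβ, hγ] at hy
  simp (disch := fun_prop) only [px_mul, py_mul, px_sub, px_const, lagrangeFluxY] at hy ⊢
  linear_combination -hy

lemma px_lagrangeFluxX_add_py_lagrangeFluxY_eq_zero
    (hT : IsElementaryForm a b c w z f θ φ α β γ δ)
    (ha : ContDiff ℝ 1 a) (hb : ContDiff ℝ 1 b) (hc : ContDiff ℝ 1 c) (hw : ContDiff ℝ 1 w)
    (hz : ContDiff ℝ 1 z) (hθ : ContDiff ℝ 2 θ) (hφ : ContDiff ℝ 2 φ)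
    (hδ : Differentiable ℝ δ) (p : ℝ × ℝ) :
    px (lagrangeFluxX a c w θ φ) p + py (lagrangeFluxY b c z θ φ) p = 0 := by
  have hc₁ := hc.differentiable one_ne_zero
  have hθ₁ := hθ.differentiable two_ne_zero
  have hφ₁ := hφ.differentiable two_ne_zero
  have hux := hT.px_sub_eq_neg_lagrangeFluxY (hb.differentiable one_ne_zero) hc₁ hθ hφ₁ hδ
  have huy := hT.py_sub_eq_lagrangeFluxX (ha.differentiable one_ne_zero) hc₁ hθ hφ₁ hδ
  have hu : ContDiff ℝ 2 (fun q => δ q - φ q * c q * θ q) := by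
    refine contDiff_succ_of_px_py (n := 1) (by fun_prop) ?_ ?_
    · rw [hux]; exact (contDiff_lagrangeFluxY hb hc hz hθ hφ).neg
    · rw [huy]; exact contDiff_lagrangeFluxX ha hc hw hθ hφ
  have := px_py_comm hu.contDiffAt (p := p)
  rw [hux, huy, py_neg] at this
  linear_combination this

end IsElementaryForm

theorem elementary_transformable_necessary_continuous_general
    (a b c w z f θ φ : ℝ × ℝ → ℝ)
    (ha : ContDiff ℝ 1 a) (hb : ContDiff ℝ 1 b) (hc : ContDiff ℝ 1 c)
    (hw : ContDiff ℝ 1 w) (hz : ContDiff ℝ 1 z)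
    (hθ : ContDiff ℝ 2 θ) (hφ : ContDiff ℝ 2 φ)
    (hθ0 : ∀ p : ℝ × ℝ, θ p ≠ 0) (hφ0 : ∀ p : ℝ × ℝ, φ p ≠ 0)
    (h : ∃ α β γ δ : ℝ × ℝ → ℝ,
      ContDiff ℝ 1 α ∧ ContDiff ℝ 1 β ∧ ContDiff ℝ 1 γ ∧ ContDiff ℝ 1 δ ∧
      ∀ X : ℝ × ℝ → ℝ, ContDiff ℝ 2 X → ∀ p : ℝ × ℝ,
        φ p * Lop a b c w z f (fun q => θ q * X q) p =
          α p * px (px X) p + β p * py (py X) p + (γ p + δ p) * px (py X) p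
            + (px α p + py δ p) * px X p + (py β p + px γ p) * py X p) :
    (∀ p : ℝ × ℝ, Lop a b c w z f θ p = 0) ∧
    (∀ p : ℝ × ℝ, Ladj a b c w z f φ p = 0) := by
  obtain ⟨α, β, γ, δ, -, -, -, hδ, hT : IsElementaryForm a b c w z f θ φ α β γ δ⟩ := h
  have hLθ := hT.Lop_eq_zero hθ hφ0
  refine ⟨hLθ, fun p => (mul_eq_zero.1 ?_).resolve_left (hθ0 p)⟩
  have hdiv := hT.px_lagrangeFluxX_add_py_lagrangeFluxY_eq_zero ha hb hc hw hz hθ hφ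
    (hδ.differentiable one_ne_zero) p
  have hid := mul_Lop_sub_mul_Ladj f (ha.differentiable one_ne_zero)
    (hb.differentiable one_ne_zero) (hc.differentiable one_ne_zero)
    (hw.differentiable one_ne_zero) (hz.differentiable one_ne_zero) hθ hφ p
  linear_combination φ p * hLθ p - hid - hdiv

/-- if the gauge transformation with `θ`, `φ` brings `ℒ` to
elementary transformable form then `ℒθ = 0` and `ℒ†φ = 0`. -/
theorem elementary_transformable_necessary_continuous
    (a b c w z f θ φ : ℝ × ℝ → ℝ)
    (ha : ContDiff ℝ 1 a) (hb : ContDiff ℝ 1 b) (hc : ContDiff ℝ 1 c)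
    (hw : ContDiff ℝ 1 w) (hz : ContDiff ℝ 1 z) (hf : ContDiff ℝ 1 f)
    (hθ : ContDiff ℝ 2 θ) (hφ : ContDiff ℝ 2 φ)
    (hθ0 : ∀ p : ℝ × ℝ, θ p ≠ 0) (hφ0 : ∀ p : ℝ × ℝ, φ p ≠ 0)
    (h : ∃ α β γ δ : ℝ × ℝ → ℝ,
      ContDiff ℝ 1 α ∧ ContDiff ℝ 1 β ∧ ContDiff ℝ 1 γ ∧ ContDiff ℝ 1 δ ∧
      ∀ X : ℝ × ℝ → ℝ, ContDiff ℝ 2 X → ∀ p : ℝ × ℝ,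
        φ p * Lop a b c w z f (fun q => θ q * X q) p =
          α p * px (px X) p + β p * py (py X) p + (γ p + δ p) * px (py X) p
            + (px α p + py δ p) * px X p + (py β p + px γ p) * py X p) :
    (∀ p : ℝ × ℝ, Lop a b c w z f θ p = 0) ∧
    (∀ p : ℝ × ℝ, Ladj a b c w z f φ p = 0) :=
  elementary_transformable_necessary_continuous_general a b c w z f θ φ ha hb hc hw hz hθ hφ hθ0 hφ0
    h
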